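/- arXiv:1605.01606 — 3 statements merged into one kernel-verified Lean document; each statement's English description precedes it below -/
import Mathlib

section
/- Let A and P be real n×n matrices with P symmetric positive definite and AᵀP + PA = -2I. Let λ_m, λ_M > 0 satisfy λ_m‖x‖² ≤ xᵀPx ≤ λ_M‖x‖² for all x ∈ ℝⁿ. Let σ ∈ (0,1), set λ = (1-σ)/λ_M, and let α ∈ (0,λ) and λ₀, β, δ ≥ 0. Suppose x, f : ℝ → ℝⁿ are such that x is differentiable with x'(t) = A x(t) + f(t) for all t ≥ 0, and ‖P‖²‖f(t)‖² ≤ σ‖x(t)‖² + λ₀β·e^{-αt} + λ₀δ for all t ≥ 0. Then for all t ≥ 0, ‖x(t)‖² ≤ a·e^{-αt} + b, where a = (x(0)ᵀP x(0))/λ_m + λ₀β/(λ_m(λ-α)) and b = λ₀δ/(λ·λ_m); in particular ‖x(t)‖ ≤ √(a+b) for all t ≥ 0. -/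
/-!
With `V t = ⟪x t, P x t⟫`, the Lyapunov equation turns the derivative of `V` along the
trajectory into `-2‖x‖²` plus cross terms in `f`, which Young's inequality bounds by
`‖x‖² + ‖P‖²‖f‖²`. The perturbation bound and `V ≤ λ_M ‖x‖²` then give the differential
inequality `V' ≤ -λ V + λ₀β e^{-αt} + λ₀δ`. Since `α < λ`, the function
`(V 0 + λ₀β/(λ-α)) e^{-αt} + λ₀δ/λ` is a supersolution; `e^{λt}` times the difference
is antitone, so it bounds `V`, and dividing by `λ_m` gives the claim.
-/

open scoped RealInnerProductSpace Matrix

theorem Matrix.inner_toEuclideanCLM_lyapunov {n : Type*} [Fintype n] [DecidableEq n]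
    (A P : Matrix n n ℝ) (z : EuclideanSpace ℝ n) :
    ⟪Matrix.toEuclideanCLM (𝕜 := ℝ) A z, Matrix.toEuclideanCLM (𝕜 := ℝ) P z⟫ +
      ⟪z, Matrix.toEuclideanCLM (𝕜 := ℝ) P (Matrix.toEuclideanCLM (𝕜 := ℝ) A z)⟫ =
    ⟪z, Matrix.toEuclideanCLM (𝕜 := ℝ) (Aᵀ * P + P * A) z⟫ := by
  have hAt : Matrix.toEuclideanCLM (𝕜 := ℝ) Aᵀ =
      ContinuousLinearMap.adjoint (Matrix.toEuclideanCLM (𝕜 := ℝ) A) := by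
    rw [← Matrix.conjTranspose_eq_transpose_of_trivial, ← Matrix.star_eq_conjTranspose, map_star,
      ContinuousLinearMap.star_eq_adjoint]
  rw [map_add, map_mul, map_mul, hAt, _root_.add_apply, inner_add_right,
    ContinuousLinearMap.mul_def, ContinuousLinearMap.mul_def, ContinuousLinearMap.comp_apply,
    ContinuousLinearMap.comp_apply, ContinuousLinearMap.adjoint_inner_right]

theorem HasDerivAt.inner_clm_apply_self {E : Type*} [NormedAddCommGroup E] [InnerProductSpace ℝ E]
    {x : ℝ → E} {x' : E} {t : ℝ} (T : E →L[ℝ] E) (hx : HasDerivAt x x' t) :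
    HasDerivAt (fun s ↦ ⟪x s, T (x s)⟫) (⟪x t, T x'⟫ + ⟪x', T (x t)⟫) t :=
  hx.inner ℝ (T.hasFDerivAt.comp_hasDerivAt t hx)

theorem le_mul_exp_of_hasDerivAt_le_neg_mul {u u' : ℝ → ℝ} {lam : ℝ}
    (hu : ∀ t ≥ 0, HasDerivAt u (u' t) t) (hu' : ∀ t ≥ 0, u' t ≤ -lam * u t) :
    ∀ t ≥ 0, u t ≤ u 0 * Real.exp (-lam * t) := by
  have hg : ∀ t ≥ 0, HasDerivAt (fun s ↦ u s * Real.exp (lam * s))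
      ((u' t + lam * u t) * Real.exp (lam * t)) t := by
    intro t ht
    have hexp : HasDerivAt (fun s ↦ Real.exp (lam * s)) (Real.exp (lam * t) * lam) t := by
      simpa using ((hasDerivAt_id t).const_mul lam).exp
    exact ((hu t ht).mul hexp).congr_deriv (by ring)
  have hanti : AntitoneOn (fun s ↦ u s * Real.exp (lam * s)) (Set.Ici 0) := by
    refine antitoneOn_of_deriv_nonpos (convex_Ici 0)
      (fun t ht ↦ (hg t ht).continuousAt.continuousWithinAt) (fun t ht ↦ ?_) (fun t ht ↦ ?_)
    all_goals rw [interior_Ici] at ht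
    · exact (hg t ht.le).differentiableAt.differentiableWithinAt
    · rw [(hg t ht.le).deriv]
      exact mul_nonpos_of_nonpos_of_nonneg (by linarith [hu' t ht.le]) (Real.exp_pos _).le
  intro t ht
  have h := hanti Set.self_mem_Ici ht ht
  simp only [mul_zero, Real.exp_zero, mul_one] at h
  calc u t = u t * Real.exp (lam * t) * Real.exp (-lam * t) := by
        rw [mul_assoc, ← Real.exp_add]; simp
    _ ≤ u 0 * Real.exp (-lam * t) := by gcongr

theorem le_mul_exp_add_of_hasDerivAt_le {V V' : ℝ → ℝ} {lam α c d C₁ C₂ : ℝ}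
    (hV : ∀ t ≥ 0, HasDerivAt V (V' t) t)
    (hV' : ∀ t ≥ 0, V' t ≤ -lam * V t + c * Real.exp (-α * t) + d)
    (hc : c ≤ (lam - α) * C₁) (hd : d ≤ lam * C₂) (h0 : V 0 ≤ C₁ + C₂) :
    ∀ t ≥ 0, V t ≤ C₁ * Real.exp (-α * t) + C₂ := by
  have hB : ∀ t : ℝ, HasDerivAt (fun s ↦ C₁ * Real.exp (-α * s) + C₂)
      (C₁ * (Real.exp (-α * t) * -α)) t := fun t ↦ by
    simpa using ((((hasDerivAt_id t).const_mul (-α)).exp).const_mul C₁).add_const C₂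
  have hu := le_mul_exp_of_hasDerivAt_le_neg_mul
    (u := fun s ↦ V s - (C₁ * Real.exp (-α * s) + C₂)) (lam := lam)
    (fun t ht ↦ (hV t ht).sub (hB t)) fun t ht ↦ by
      have := hV' t ht
      have hE := Real.exp_pos (-α * t)
      nlinarith [mul_le_mul_of_nonneg_left hc hE.le]
  intro t ht
  have := hu t ht
  simp only [mul_zero, Real.exp_zero, mul_one, add_comm C₁] at this
  nlinarith [Real.exp_pos (-lam * t)]

theorem inner_add_inner_le_of_lyapunov {E : Type*} [NormedAddCommGroup E] [InnerProductSpace ℝ E]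
    {S T : E →L[ℝ] E} (hST : ∀ z, ⟪S z, T z⟫ + ⟪z, T (S z)⟫ = -2 * ‖z‖ ^ 2) (x f : E) :
    ⟪x, T (S x + f)⟫ + ⟪S x + f, T x⟫ ≤ -‖x‖ ^ 2 + ‖T‖ ^ 2 * ‖f‖ ^ 2 := by
  have hxf : ⟪x, T f⟫ ≤ ‖x‖ * (‖T‖ * ‖f‖) :=
    (real_inner_le_norm _ _).trans (mul_le_mul_of_nonneg_left (T.le_opNorm f) (norm_nonneg _))
  have hfx : ⟪f, T x⟫ ≤ ‖x‖ * (‖T‖ * ‖f‖) := by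
    rw [real_inner_comm]
    calc ⟪T x, f⟫ ≤ ‖T x‖ * ‖f‖ := real_inner_le_norm _ _
      _ ≤ ‖T‖ * ‖x‖ * ‖f‖ := by gcongr; exact T.le_opNorm x
      _ = ‖x‖ * (‖T‖ * ‖f‖) := by ring
  rw [map_add, inner_add_right, inner_add_left]
  nlinarith [hST x, sq_nonneg (‖x‖ - ‖T‖ * ‖f‖)]

theorem stmt_0_general {n : ℕ} (A P : Matrix (Fin n) (Fin n) ℝ)
    (hLyap : Aᵀ * P + P * A = (-2 : ℝ) • (1 : Matrix (Fin n) (Fin n) ℝ))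
    (lm lM : ℝ) (hlm : 0 < lm) (hlM : 0 < lM)
    (hquad : ∀ z : EuclideanSpace ℝ (Fin n),
      lm * ‖z‖ ^ 2 ≤ ⟪z, Matrix.toEuclideanCLM (𝕜 := ℝ) P z⟫ ∧
      ⟪z, Matrix.toEuclideanCLM (𝕜 := ℝ) P z⟫ ≤ lM * ‖z‖ ^ 2)
    (σ lam : ℝ) (hlam : lam = (1 - σ) / lM)
    (α : ℝ) (hα : α ∈ Set.Ioo 0 lam)
    (lam0 β δ : ℝ) (hlam0 : 0 ≤ lam0) (hβ : 0 ≤ β) (hδ : 0 ≤ δ)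
    (x f : ℝ → EuclideanSpace ℝ (Fin n))
    (hx : ∀ t ≥ (0 : ℝ), HasDerivAt x (Matrix.toEuclideanCLM (𝕜 := ℝ) A (x t) + f t) t)
    (hf : ∀ t ≥ (0 : ℝ), ‖Matrix.toEuclideanCLM (𝕜 := ℝ) P‖ ^ 2 * ‖f t‖ ^ 2 ≤
      σ * ‖x t‖ ^ 2 + lam0 * β * Real.exp (-α * t) + lam0 * δ)
    (a b : ℝ)
    (ha : a = ⟪x 0, Matrix.toEuclideanCLM (𝕜 := ℝ) P (x 0)⟫ / lm + lam0 * β / (lm * (lam - α)))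
    (hb : b = lam0 * δ / (lam * lm)) :
    (∀ t ≥ (0 : ℝ), ‖x t‖ ^ 2 ≤ a * Real.exp (-α * t) + b) ∧
    (∀ t ≥ (0 : ℝ), ‖x t‖ ≤ Real.sqrt (a + b)) := by
  obtain ⟨hα0, hαlam⟩ := hα
  set T := Matrix.toEuclideanCLM (𝕜 := ℝ) P
  set S := Matrix.toEuclideanCLM (𝕜 := ℝ) A
  have hlam_pos : 0 < lam := hα0.trans hαlam
  have hgap : 0 < lam - α := sub_pos.2 hαlam
  have hST (z : EuclideanSpace ℝ (Fin n)) : ⟪S z, T z⟫ + ⟪z, T (S z)⟫ = -2 * ‖z‖ ^ 2 := by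
    rw [Matrix.inner_toEuclideanCLM_lyapunov, hLyap, map_smul, map_one, smul_apply,
      one_apply_eq_self, real_inner_smul_right, real_inner_self_eq_norm_sq]
  have hV' : ∀ t ≥ (0 : ℝ), ⟪x t, T (S (x t) + f t)⟫ + ⟪S (x t) + f t, T (x t)⟫ ≤
      -lam * ⟪x t, T (x t)⟫ + lam0 * β * Real.exp (-α * t) + lam0 * δ := by
    intro t ht
    have hlamV : lam * ⟪x t, T (x t)⟫ ≤ (1 - σ) * ‖x t‖ ^ 2 := by
      calc lam * ⟪x t, T (x t)⟫ ≤ lam * (lM * ‖x t‖ ^ 2) := by gcongr; exact (hquad (x t)).2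
        _ = (1 - σ) * ‖x t‖ ^ 2 := by rw [hlam]; field_simp
    linarith [inner_add_inner_le_of_lyapunov hST (x t) (f t), hf t ht]
  have hV0 : 0 ≤ ⟪x 0, T (x 0)⟫ := (by positivity : 0 ≤ lm * ‖x 0‖ ^ 2).trans (hquad (x 0)).1
  have hC₁ : 0 ≤ lam0 * β / (lam - α) := by positivity
  have hC₂ : 0 ≤ lam0 * δ / lam := by positivity
  have hbound := le_mul_exp_add_of_hasDerivAt_le (fun t ht ↦ (hx t ht).inner_clm_apply_self T) hV'
    (C₁ := ⟪x 0, T (x 0)⟫ + lam0 * β / (lam - α)) (C₂ := lam0 * δ / lam)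
    (by rw [mul_add, mul_div_cancel₀ _ hgap.ne']; exact le_add_of_nonneg_left (by positivity))
    (mul_div_cancel₀ _ hlam_pos.ne').ge (by linarith)
  have ha' : a = (⟪x 0, T (x 0)⟫ + lam0 * β / (lam - α)) / lm := by rw [ha]; field_simp
  have hb' : b = lam0 * δ / lam / lm := by rw [hb, div_div]
  have hsq : ∀ t ≥ (0 : ℝ), ‖x t‖ ^ 2 ≤ a * Real.exp (-α * t) + b := by
    intro t ht
    rw [ha', hb', div_mul_eq_mul_div, ← add_div, le_div_iff₀ hlm]
    linarith [(hquad (x t)).1, hbound t ht]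
  refine ⟨hsq, fun t ht ↦ Real.le_sqrt_of_sq_le ?_⟩
  have ha0 : 0 ≤ a := by rw [ha']; exact div_nonneg (by linarith) hlm.le
  have hexp : Real.exp (-α * t) ≤ 1 := Real.exp_le_one_iff.2 (by nlinarith)
  linarith [hsq t ht, mul_le_of_le_one_right ha0 hexp]

/-- Core estimate of Lemma 2: exponential-plus-constant bound on the squared norm of the
trajectory of a perturbed linear system governed by a Lyapunov equation. -/
theorem stmt_0 {n : ℕ} (A P : Matrix (Fin n) (Fin n) ℝ)
    (hPsymm : P.IsSymm)
    (hPpos : ∀ z : EuclideanSpace ℝ (Fin n), z ≠ 0 →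
      0 < ⟪z, Matrix.toEuclideanCLM (𝕜 := ℝ) P z⟫)
    (hLyap : Aᵀ * P + P * A = (-2 : ℝ) • (1 : Matrix (Fin n) (Fin n) ℝ))
    (lm lM : ℝ) (hlm : 0 < lm) (hlM : 0 < lM)
    (hquad : ∀ z : EuclideanSpace ℝ (Fin n),
      lm * ‖z‖ ^ 2 ≤ ⟪z, Matrix.toEuclideanCLM (𝕜 := ℝ) P z⟫ ∧
      ⟪z, Matrix.toEuclideanCLM (𝕜 := ℝ) P z⟫ ≤ lM * ‖z‖ ^ 2)
    (σ lam : ℝ) (hσ : σ ∈ Set.Ioo (0 : ℝ) 1) (hlam : lam = (1 - σ) / lM)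
    (α : ℝ) (hα : α ∈ Set.Ioo 0 lam)
    (lam0 β δ : ℝ) (hlam0 : 0 ≤ lam0) (hβ : 0 ≤ β) (hδ : 0 ≤ δ)
    (x f : ℝ → EuclideanSpace ℝ (Fin n))
    (hx : ∀ t ≥ (0 : ℝ), HasDerivAt x (Matrix.toEuclideanCLM (𝕜 := ℝ) A (x t) + f t) t)
    (hf : ∀ t ≥ (0 : ℝ), ‖Matrix.toEuclideanCLM (𝕜 := ℝ) P‖ ^ 2 * ‖f t‖ ^ 2 ≤
      σ * ‖x t‖ ^ 2 + lam0 * β * Real.exp (-α * t) + lam0 * δ)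
    (a b : ℝ)
    (ha : a = ⟪x 0, Matrix.toEuclideanCLM (𝕜 := ℝ) P (x 0)⟫ / lm + lam0 * β / (lm * (lam - α)))
    (hb : b = lam0 * δ / (lam * lm)) :
    (∀ t ≥ (0 : ℝ), ‖x t‖ ^ 2 ≤ a * Real.exp (-α * t) + b) ∧
    (∀ t ≥ (0 : ℝ), ‖x t‖ ≤ Real.sqrt (a + b)) :=
  stmt_0_general A P hLyap lm lM hlm hlM hquad σ lam hlam α hα lam0 β δ hlam0 hβ hδ x f hx hf a b ha
    hb
end

section
/- Let A and P be real n×n matrices with P symmetric positive definite and AᵀP + PA = -2I. Let λ_M > 0 satisfy xᵀPx ≤ λ_M‖x‖² for all x ∈ ℝⁿ. Let σ ∈ (0,1), λ = (1-σ)/λ_M, α > 0 and λ₀, β, δ ≥ 0. Suppose x, f : ℝ → ℝⁿ are such that x is differentiable with x'(t) = A x(t) + f(t) for all t ≥ 0, and ‖P‖²‖f(t)‖² ≤ σ‖x(t)‖² + λ₀β·e^{-αt} + λ₀δ for all t ≥ 0. Then the function V(t) := x(t)ᵀP x(t) is differentiable on [0,∞) and satisfies V'(t) ≤ -λ·V(t)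 + λ₀β·e^{-αt} + λ₀δ for all t ≥ 0. -/
open scoped RealInnerProductSpace Matrix

/-!
Along `x' = A x + f` the derivative of `V = ⟪x, P x⟫` is `⟪x, (AᵀP + PA) x⟫ + 2⟪P x, f⟫`, which the
Lyapunov equation turns into `-2‖x‖² + 2⟪P x, f⟫`. Young's inequality bounds the cross term by
`‖x‖² + ‖P‖²‖f‖²`, and the hypothesis on `f` then gives `V' ≤ -(1 - σ)‖x‖² + λ₀βe^{-αt} + λ₀δ`.
Finally `V ≤ λ_M ‖x‖²` converts `-(1 - σ)‖x‖²` into `-λ V`.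
-/

section LyapunovDerivative

variable {E : Type*} [NormedAddCommGroup E] [InnerProductSpace ℝ E]

theorem HasDerivAt.inner_apply_self (T : E →L[ℝ] E) {x : ℝ → E} {x' : E} {t : ℝ}
    (hx : HasDerivAt x x' t) :
    HasDerivAt (fun s ↦ ⟪x s, T (x s)⟫) (⟪x t, T x'⟫ + ⟪x', T (x t)⟫) t :=
  hx.inner ℝ (T.hasFDerivAt.comp_hasDerivAt t hx)

theorem two_inner_apply_le (T : E →L[ℝ] E) (z w : E) :
    2 * ⟪T z, w⟫ ≤ ‖z‖ ^ 2 + ‖T‖ ^ 2 * ‖w‖ ^ 2 := by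
  have hCS : ⟪T z, w⟫ ≤ ‖T‖ * ‖z‖ * ‖w‖ :=
    (real_inner_le_norm _ _).trans
      (mul_le_mul_of_nonneg_right (T.le_opNorm z) (norm_nonneg w))
  nlinarith [sq_nonneg (‖z‖ - ‖T‖ * ‖w‖)]

theorem inner_lyapunov_le [CompleteSpace E] {T L : E →L[ℝ] E} (hT : IsSelfAdjoint T)
    (hL : ∀ z, ⟪L z, T z⟫ + ⟪z, T (L z)⟫ = -2 * ‖z‖ ^ 2) (z w : E) :
    ⟪z, T (L z + w)⟫ + ⟪L z + w, T z⟫ ≤ -‖z‖ ^ 2 + ‖T‖ ^ 2 * ‖w‖ ^ 2 := by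
  have hzw : ⟪z, T w⟫ = ⟪T z, w⟫ := (hT.isSymmetric z w).symm
  have hwz : ⟪w, T z⟫ = ⟪T z, w⟫ := real_inner_comm _ _
  rw [map_add, inner_add_right, inner_add_left, hzw, hwz]
  linarith [hL z, two_inner_apply_le T z w]

end LyapunovDerivative

namespace Matrix

variable {ι : Type*} [Fintype ι] [DecidableEq ι]

theorem isSelfAdjoint_toEuclideanCLM {P : Matrix ι ι ℝ} (hP : P.IsSymm) :
    IsSelfAdjoint (toEuclideanCLM (𝕜 := ℝ) P) :=
  (isHermitian_iff_isSymm.mpr hP).isSelfAdjoint.map _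

theorem inner_toEuclideanCLM_lyapunov_s1 (A P : Matrix ι ι ℝ) (z : EuclideanSpace ℝ ι) :
    ⟪toEuclideanCLM (𝕜 := ℝ) A z, toEuclideanCLM (𝕜 := ℝ) P z⟫ +
      ⟪z, toEuclideanCLM (𝕜 := ℝ) P (toEuclideanCLM (𝕜 := ℝ) A z)⟫ =
      ⟪z, toEuclideanCLM (𝕜 := ℝ) (Aᵀ * P + P * A) z⟫ := by
  have hAt : toEuclideanCLM (𝕜 := ℝ) Aᵀ = (toEuclideanCLM (𝕜 := ℝ) A).adjoint := by
    rw [← ContinuousLinearMap.star_eq_adjoint, ← map_star, star_eq_conjTranspose,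
      conjTranspose_eq_transpose_of_trivial]
  rw [← ContinuousLinearMap.adjoint_inner_right, ← hAt, ← inner_add_right, map_add, map_mul,
    map_mul]
  rfl

end Matrix

theorem stmt_1_general {n : ℕ} (A P : Matrix (Fin n) (Fin n) ℝ)
    (hPsymm : P.IsSymm)
    (hLyap : Aᵀ * P + P * A = (-2 : ℝ) • (1 : Matrix (Fin n) (Fin n) ℝ))
    (lM : ℝ) (hlM : 0 < lM)
    (hquad : ∀ z : EuclideanSpace ℝ (Fin n),
      ⟪z, Matrix.toEuclideanCLM (𝕜 := ℝ) P z⟫ ≤ lM * ‖z‖ ^ 2)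
    (σ lam : ℝ) (hσ : σ ∈ Set.Ioo (0 : ℝ) 1) (hlam : lam = (1 - σ) / lM)
    (α : ℝ)
    (lam0 β δ : ℝ)
    (x f : ℝ → EuclideanSpace ℝ (Fin n))
    (hx : ∀ t ≥ (0 : ℝ), HasDerivAt x (Matrix.toEuclideanCLM (𝕜 := ℝ) A (x t) + f t) t)
    (hf : ∀ t ≥ (0 : ℝ), ‖Matrix.toEuclideanCLM (𝕜 := ℝ) P‖ ^ 2 * ‖f t‖ ^ 2 ≤
      σ * ‖x t‖ ^ 2 + lam0 * β * Real.exp (-α * t) + lam0 * δ)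
    (V : ℝ → ℝ)
    (hV : ∀ t, V t = ⟪x t, Matrix.toEuclideanCLM (𝕜 := ℝ) P (x t)⟫) :
    (∀ t ≥ (0 : ℝ), DifferentiableAt ℝ V t) ∧
    (∀ t ≥ (0 : ℝ), deriv V t ≤ -lam * V t + lam0 * β * Real.exp (-α * t) + lam0 * δ) := by
  set T := Matrix.toEuclideanCLM (𝕜 := ℝ) P
  set L := Matrix.toEuclideanCLM (𝕜 := ℝ) A
  have hL (z : EuclideanSpace ℝ (Fin n)) : ⟪L z, T z⟫ + ⟪z, T (L z)⟫ = -2 * ‖z‖ ^ 2 := by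
    rw [Matrix.inner_toEuclideanCLM_lyapunov_s1, hLyap, map_smul, map_one, smul_apply,
      one_apply_eq_self, real_inner_smul_right, real_inner_self_eq_norm_sq]
  have hVd (t : ℝ) (ht : 0 ≤ t) :
      HasDerivAt V (⟪x t, T (L (x t) + f t)⟫ + ⟪L (x t) + f t, T (x t)⟫) t := by
    rw [funext hV]
    exact (hx t ht).inner_apply_self T
  refine ⟨fun t ht ↦ (hVd t ht).differentiableAt, fun t ht ↦ ?_⟩
  have hlamV : lam * V t ≤ (1 - σ) * ‖x t‖ ^ 2 := by
    have hlam_nonneg : 0 ≤ lam := by rw [hlam]; exact div_nonneg (by linarith [hσ.2]) hlM.le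
    calc lam * V t ≤ lam * (lM * ‖x t‖ ^ 2) := by rw [hV]; gcongr; exact hquad _
      _ = (1 - σ) * ‖x t‖ ^ 2 := by rw [hlam]; field_simp
  rw [(hVd t ht).deriv]
  linarith [hf t ht,
    inner_lyapunov_le (Matrix.isSelfAdjoint_toEuclideanCLM hPsymm) hL (x t) (f t)]

/-- Lyapunov derivative estimate (24) in the proof of Lemma 2. -/
theorem stmt_1 {n : ℕ} (A P : Matrix (Fin n) (Fin n) ℝ)
    (hPsymm : P.IsSymm)
    (hPpos : ∀ z : EuclideanSpace ℝ (Fin n), z ≠ 0 →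
      0 < ⟪z, Matrix.toEuclideanCLM (𝕜 := ℝ) P z⟫)
    (hLyap : Aᵀ * P + P * A = (-2 : ℝ) • (1 : Matrix (Fin n) (Fin n) ℝ))
    (lM : ℝ) (hlM : 0 < lM)
    (hquad : ∀ z : EuclideanSpace ℝ (Fin n),
      ⟪z, Matrix.toEuclideanCLM (𝕜 := ℝ) P z⟫ ≤ lM * ‖z‖ ^ 2)
    (σ lam : ℝ) (hσ : σ ∈ Set.Ioo (0 : ℝ) 1) (hlam : lam = (1 - σ) / lM)
    (α : ℝ) (hα : 0 < α)
    (lam0 β δ : ℝ) (hlam0 : 0 ≤ lam0) (hβ : 0 ≤ β) (hδ : 0 ≤ δ)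
    (x f : ℝ → EuclideanSpace ℝ (Fin n))
    (hx : ∀ t ≥ (0 : ℝ), HasDerivAt x (Matrix.toEuclideanCLM (𝕜 := ℝ) A (x t) + f t) t)
    (hf : ∀ t ≥ (0 : ℝ), ‖Matrix.toEuclideanCLM (𝕜 := ℝ) P‖ ^ 2 * ‖f t‖ ^ 2 ≤
      σ * ‖x t‖ ^ 2 + lam0 * β * Real.exp (-α * t) + lam0 * δ)
    (V : ℝ → ℝ)
    (hV : ∀ t, V t = ⟪x t, Matrix.toEuclideanCLM (𝕜 := ℝ) P (x t)⟫) :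
    (∀ t ≥ (0 : ℝ), DifferentiableAt ℝ V t) ∧
    (∀ t ≥ (0 : ℝ), deriv V t ≤ -lam * V t + lam0 * β * Real.exp (-α * t) + lam0 * δ) :=
  stmt_1_general A P hPsymm hLyap lM hlM hquad σ lam hσ hlam α lam0 β δ x f hx hf V hV
end

section
/- Let A and P be real n×n matrices with P symmetric positive definite and AᵀP + PA = -2I. Let λ_m, λ_M > 0 satisfy λ_m‖x‖² ≤ xᵀPx ≤ λ_M‖x‖² for all x ∈ ℝⁿ. Let σ ∈ (0,1), λ = (1-σ)/λ_M, α ∈ (0,λ), λ₀ > 0, β ≥ 0 and ε > 0, and set δ = (λ·λ_m/λ₀)·ε². Suppose x, f : ℝ → ℝⁿ are such that x is differentiable with x'(t) = A x(t) + f(t) for all t ≥ 0, and ‖P‖²‖f(t)‖² ≤ σ‖x(t)‖² + λ₀β·e^{-αt} + λ₀δ for all t ≥ 0. Then x is bounded on [0,∞) and limsup_{t→∞} ‖x(t)‖ ≤ ε. -/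
open Filter Topology Set
open scoped RealInnerProductSpace Matrix

/-!
`V(t) = ⟪x t, P (x t)⟫` is a Lyapunov function: the identity `AᵀP + PA = -2I` and Young's
inequality give `V' ≤ -‖x‖² + ‖P‖²‖f‖²`, and with the bound on `f` and `V ≤ λ_M ‖x‖²` this becomes
`V' ≤ -λ V + λ₀ β e^{-αt} + λ₀ δ`. By the integrating factor `e^{λt}`, `V` stays below the solution
`c e^{-λt} + K e^{-αt} + λ_m ε²` of the corresponding linear equation with the same initial value,
and `λ_m ‖x‖² ≤ V` turns this into boundedness of `x` and `limsup ‖x‖ ≤ ε`.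
-/

section Lyapunov

variable {E : Type*} [NormedAddCommGroup E] [InnerProductSpace ℝ E]

theorem LinearMap.IsSymmetric.hasDerivAt_inner_apply_self {P : E →L[ℝ] E}
    (hP : (P : E →ₗ[ℝ] E).IsSymmetric) {x : ℝ → E} {v : E} {t : ℝ} (hx : HasDerivAt x v t) :
    HasDerivAt (fun s => ⟪x s, P (x s)⟫) (2 * ⟪x t, P v⟫) t := by
  have hsymm : ⟪v, P (x t)⟫ = ⟪x t, P v⟫ := by
    rw [real_inner_comm (P v)]; exact (hP v (x t)).symm
  refine (hx.inner ℝ (P.hasFDerivAt.comp_hasDerivAt t hx)).congr_deriv ?_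
  rw [Function.comp_apply, hsymm]; ring

theorem IsSelfAdjoint.inner_apply_apply_eq_neg_norm_sq [CompleteSpace E] {A P : E →L[ℝ] E}
    (hP : IsSelfAdjoint P) (hAP : ContinuousLinearMap.adjoint A * P + P * A = (-2 : ℝ) • 1)
    (z : E) : ⟪z, P (A z)⟫ = -‖z‖ ^ 2 := by
  have h := congrArg (fun T : E →L[ℝ] E => ⟪z, T z⟫) hAP
  simp only [add_apply, mul_apply_eq_comp, smul_apply, one_apply_eq_self, inner_add_right,
    inner_smul_right, real_inner_self_eq_norm_sq, ContinuousLinearMap.adjoint_inner_right] at h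
  have hsymm : ⟪P z, A z⟫ = ⟪z, P (A z)⟫ := hP.isSymmetric z (A z)
  linarith [real_inner_comm (P z) (A z)]

theorem two_mul_inner_apply_le (P : E →L[ℝ] E) (z w : E) :
    2 * ⟪z, P w⟫ ≤ ‖z‖ ^ 2 + ‖P‖ ^ 2 * ‖w‖ ^ 2 :=
  calc 2 * ⟪z, P w⟫ ≤ 2 * (‖z‖ * (‖P‖ * ‖w‖)) := by
        gcongr
        exact (real_inner_le_norm _ _).trans (by gcongr; exact P.le_opNorm w)
    _ ≤ ‖z‖ ^ 2 + (‖P‖ * ‖w‖) ^ 2 := by linarith [two_mul_le_add_sq ‖z‖ (‖P‖ * ‖w‖)]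
    _ = ‖z‖ ^ 2 + ‖P‖ ^ 2 * ‖w‖ ^ 2 := by ring

theorem two_mul_inner_apply_add_add_mul_le {P A : E →L[ℝ] E}
    (hPA : ∀ z, ⟪z, P (A z)⟫ = -‖z‖ ^ 2) {z w : E} {lam lM σ g : ℝ} (hlam : 0 ≤ lam)
    (hlamlM : lam * lM = 1 - σ) (hPz : ⟪z, P z⟫ ≤ lM * ‖z‖ ^ 2)
    (hw : ‖P‖ ^ 2 * ‖w‖ ^ 2 ≤ σ * ‖z‖ ^ 2 + g) :
    2 * ⟪z, P (A z + w)⟫ + lam * ⟪z, P z⟫ ≤ g := by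
  have hV : lam * ⟪z, P z⟫ ≤ (1 - σ) * ‖z‖ ^ 2 :=
    calc lam * ⟪z, P z⟫ ≤ lam * (lM * ‖z‖ ^ 2) := by gcongr
      _ = (1 - σ) * ‖z‖ ^ 2 := by rw [← hlamlM]; ring
  rw [map_add, inner_add_right, hPA]
  linarith [two_mul_inner_apply_le P z w]

end Lyapunov

theorem Matrix.IsSymm.isSelfAdjoint_toEuclideanCLM {ι : Type*} [Fintype ι] [DecidableEq ι]
    {P : Matrix ι ι ℝ} (hP : P.IsSymm) : IsSelfAdjoint (Matrix.toEuclideanCLM (𝕜 := ℝ) P) := by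
  rw [IsSelfAdjoint, ← map_star, Matrix.star_eq_conjTranspose,
    Matrix.conjTranspose_eq_transpose_of_trivial, hP.eq]

theorem Matrix.toEuclideanCLM_transpose {ι : Type*} [Fintype ι] [DecidableEq ι]
    (A : Matrix ι ι ℝ) :
    Matrix.toEuclideanCLM (𝕜 := ℝ) Aᵀ =
      ContinuousLinearMap.adjoint (Matrix.toEuclideanCLM (𝕜 := ℝ) A) := by
  rw [← ContinuousLinearMap.star_eq_adjoint, ← map_star, Matrix.star_eq_conjTranspose,
    Matrix.conjTranspose_eq_transpose_of_trivial]

theorem Matrix.inner_toEuclideanCLM_apply_eq_neg_norm_sq {ι : Type*} [Fintype ι] [DecidableEq ι]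
    {A P : Matrix ι ι ℝ} (hP : P.IsSymm) (hAP : Aᵀ * P + P * A = (-2 : ℝ) • 1)
    (z : EuclideanSpace ℝ ι) :
    ⟪z, Matrix.toEuclideanCLM (𝕜 := ℝ) P (Matrix.toEuclideanCLM (𝕜 := ℝ) A z)⟫ = -‖z‖ ^ 2 :=
  (Matrix.IsSymm.isSelfAdjoint_toEuclideanCLM hP).inner_apply_apply_eq_neg_norm_sq
    (by simpa [Matrix.toEuclideanCLM_transpose] using
      congrArg (Matrix.toEuclideanCLM (𝕜 := ℝ)) hAP) z

theorem le_of_hasDerivAt_add_mul_le {V W V' W' : ℝ → ℝ} {lam a : ℝ}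
    (hV : ∀ t ≥ a, HasDerivAt V (V' t) t) (hW : ∀ t ≥ a, HasDerivAt W (W' t) t)
    (hle : ∀ t ≥ a, V' t + lam * V t ≤ W' t + lam * W t) (ha : V a ≤ W a) :
    ∀ t ≥ a, V t ≤ W t := by
  set F : ℝ → ℝ := fun t => Real.exp (lam * t) * (V t - W t)
  have hF : ∀ t ≥ a, HasDerivAt F
      (Real.exp (lam * t) * (V' t + lam * V t - (W' t + lam * W t))) t := fun t ht =>
    (((hasDerivAt_id t).const_mul lam).exp.mul ((hV t ht).sub (hW t ht))).congr_deriv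
      (by simp only [id_eq, Pi.sub_apply]; ring)
  have hanti : AntitoneOn F (Ici a) := by
    refine antitoneOn_of_hasDerivWithinAt_nonpos (convex_Ici a)
      (fun t ht => (hF t ht).continuousAt.continuousWithinAt)
      (fun t ht => (hF t (interior_subset ht)).hasDerivWithinAt) fun t ht => ?_
    exact mul_nonpos_of_nonneg_of_nonpos (Real.exp_pos _).le
      (sub_nonpos.2 (hle t (interior_subset ht)))
  intro t ht
  have hFt : F t ≤ 0 := (hanti self_mem_Ici ht ht).trans
    (mul_nonpos_of_nonneg_of_nonpos (Real.exp_pos _).le (sub_nonpos.2 ha))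
  exact sub_nonpos.1 (nonpos_of_mul_nonpos_right hFt (Real.exp_pos _))

noncomputable def expDecayEnvelope (c K L lam α t : ℝ) : ℝ :=
  c * Real.exp (-(lam * t)) + K * Real.exp (-(α * t)) + L

theorem hasDerivAt_expDecayEnvelope (c K L lam α t : ℝ) :
    HasDerivAt (expDecayEnvelope c K L lam α)
      ((lam - α) * K * Real.exp (-(α * t)) + lam * L - lam * expDecayEnvelope c K L lam α t) t := by
  have hexp (r : ℝ) : HasDerivAt (fun s => Real.exp (-(r * s))) (-r * Real.exp (-(r * t))) t :=
    ((hasDerivAt_id t).const_mul r).neg.exp.congr_deriv (by simp only [id_eq, Pi.neg_apply]; ring)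
  exact ((((hexp lam).const_mul c).add ((hexp α).const_mul K)).add_const L).congr_deriv
    (by simp only [expDecayEnvelope]; ring)

theorem expDecayEnvelope_zero (c K L lam α : ℝ) :
    expDecayEnvelope c K L lam α 0 = c + K + L := by
  simp [expDecayEnvelope]

theorem expDecayEnvelope_le {lam α t : ℝ} (hlam : 0 ≤ lam) (hα : 0 ≤ α) (ht : 0 ≤ t)
    (c K L : ℝ) : expDecayEnvelope c K L lam α t ≤ |c| + |K| + L := by
  have hexp_le {r : ℝ} (hr : 0 ≤ r) : Real.exp (-(r * t)) ≤ 1 :=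
    Real.exp_le_one_iff.2 (neg_nonpos.2 (mul_nonneg hr ht))
  have hterm (a : ℝ) {r : ℝ} (hr : 0 ≤ r) : a * Real.exp (-(r * t)) ≤ |a| :=
    calc a * Real.exp (-(r * t)) ≤ |a| * Real.exp (-(r * t)) := by gcongr; exact le_abs_self a
      _ ≤ |a| := mul_le_of_le_one_right (abs_nonneg a) (hexp_le hr)
  unfold expDecayEnvelope
  linarith [hterm c hlam, hterm K hα]

theorem tendsto_expDecayEnvelope {lam α : ℝ} (hlam : 0 < lam) (hα : 0 < α) (c K L : ℝ) :
    Tendsto (expDecayEnvelope c K L lam α) atTop (𝓝 L) := by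
  have hexp {r : ℝ} (hr : 0 < r) : Tendsto (fun t => Real.exp (-(r * t))) atTop (𝓝 0) :=
    Real.tendsto_exp_neg_atTop_nhds_zero.comp (tendsto_id.const_mul_atTop hr)
  have h := (((hexp hlam).const_mul c).add ((hexp hα).const_mul K)).add_const L
  rwa [mul_zero, mul_zero, zero_add, zero_add] at h

theorem limsup_le_of_sq_le_of_tendsto {ι : Type*} {l : Filter ι} [l.NeBot] {y u : ι → ℝ} {ε : ℝ}
    (hε : 0 ≤ ε) (hy : ∀ i, 0 ≤ y i) (hyu : ∀ᶠ i in l, y i ^ 2 ≤ u i)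
    (hu : Tendsto u l (𝓝 (ε ^ 2))) : limsup y l ≤ ε := by
  have hsqrt : Tendsto (fun i => Real.sqrt (u i)) l (𝓝 ε) := by
    simpa [Real.sqrt_sq hε] using hu.sqrt
  calc limsup y l ≤ limsup (fun i => Real.sqrt (u i)) l :=
        limsup_le_limsup (hyu.mono fun i hi => Real.le_sqrt_of_sq_le hi)
          (isCoboundedUnder_le_of_le l hy) hsqrt.isBoundedUnder_le
    _ = ε := hsqrt.limsup_eq

theorem stmt_6_general {n : ℕ} (A P : Matrix (Fin n) (Fin n) ℝ)
    (hPsymm : P.IsSymm)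
    (hLyap : Aᵀ * P + P * A = (-2 : ℝ) • (1 : Matrix (Fin n) (Fin n) ℝ))
    (lm lM : ℝ) (hlm : 0 < lm) (hlM : 0 < lM)
    (hquad : ∀ z : EuclideanSpace ℝ (Fin n),
      lm * ‖z‖ ^ 2 ≤ ⟪z, Matrix.toEuclideanCLM (𝕜 := ℝ) P z⟫ ∧
      ⟪z, Matrix.toEuclideanCLM (𝕜 := ℝ) P z⟫ ≤ lM * ‖z‖ ^ 2)
    (σ lam : ℝ) (hlam : lam = (1 - σ) / lM)
    (α : ℝ) (hα : α ∈ Set.Ioo 0 lam)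
    (lam0 β ε δ : ℝ) (hlam0 : 0 < lam0) (hε : 0 < ε)
    (hδ : δ = lam * lm / lam0 * ε ^ 2)
    (x f : ℝ → EuclideanSpace ℝ (Fin n))
    (hx : ∀ t ≥ (0 : ℝ), HasDerivAt x (Matrix.toEuclideanCLM (𝕜 := ℝ) A (x t) + f t) t)
    (hf : ∀ t ≥ (0 : ℝ), ‖Matrix.toEuclideanCLM (𝕜 := ℝ) P‖ ^ 2 * ‖f t‖ ^ 2 ≤
      σ * ‖x t‖ ^ 2 + lam0 * β * Real.exp (-α * t) + lam0 * δ) :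
    (∃ C : ℝ, ∀ t ≥ (0 : ℝ), ‖x t‖ ≤ C) ∧
    Filter.limsup (fun t => ‖x t‖) Filter.atTop ≤ ε := by
  obtain ⟨hα0, hαlam⟩ := hα
  have hlam_pos : 0 < lam := hα0.trans hαlam
  have hPsa := Matrix.IsSymm.isSelfAdjoint_toEuclideanCLM hPsymm
  have hPA := Matrix.inner_toEuclideanCLM_apply_eq_neg_norm_sq hPsymm hLyap
  set V : ℝ → ℝ := fun t => ⟪x t, Matrix.toEuclideanCLM (𝕜 := ℝ) P (x t)⟫
  -- `W` solves `W' = -λ W + λ₀ β e^{-αt} + λ₀ δ` with `W 0 = V 0`.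
  set K := lam0 * β / (lam - α)
  set W := expDecayEnvelope (V 0 - K - lm * ε ^ 2) K (lm * ε ^ 2) lam α
  have hK : (lam - α) * K = lam0 * β := mul_div_cancel₀ _ (sub_pos.2 hαlam).ne'
  have hL : lam * (lm * ε ^ 2) = lam0 * δ := by rw [hδ]; field_simp
  have hlamlM : lam * lM = 1 - σ := by rw [hlam]; field_simp
  have hVW : ∀ t ≥ 0, V t ≤ W t := by
    refine le_of_hasDerivAt_add_mul_le (lam := lam)
      (fun t ht => hPsa.isSymmetric.hasDerivAt_inner_apply_self (hx t ht))
      (fun t _ => hasDerivAt_expDecayEnvelope _ _ _ _ _ t) (fun t ht => ?_)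
      (by simp only [W, expDecayEnvelope_zero]; linarith)
    have := two_mul_inner_apply_add_add_mul_le hPA hlam_pos.le hlamlM (hquad (x t)).2
      ((hf t ht).trans_eq (add_assoc _ _ _))
    rw [hK, hL, ← neg_mul]
    linarith
  have hxW : ∀ t ≥ 0, ‖x t‖ ^ 2 ≤ W t / lm := fun t ht =>
    (le_div_iff₀ hlm).2 (by linarith [(hquad (x t)).1, hVW t ht])
  refine ⟨⟨Real.sqrt ((|V 0 - K - lm * ε ^ 2| + |K| + lm * ε ^ 2) / lm), fun t ht =>
    Real.le_sqrt_of_sq_le ((hxW t ht).trans ?_)⟩, ?_⟩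
  · gcongr
    exact expDecayEnvelope_le hlam_pos.le hα0.le ht _ _ _
  refine limsup_le_of_sq_le_of_tendsto hε.le (fun t => norm_nonneg _)
    (Filter.eventually_atTop.2 ⟨0, hxW⟩) ?_
  convert (tendsto_expDecayEnvelope hlam_pos hα0 (V 0 - K - lm * ε ^ 2) K _).div_const lm using 2
  field_simp

/-- Practical-stabilization conclusion of Theorem 1 for a single perturbed linear system:
with the event-trigger threshold δ = (λ·λ_m/λ₀)·ε², the trajectory is bounded on [0,∞)
and its norm is ultimately bounded by ε. -/
theorem stmt_6 {n : ℕ} (A P : Matrix (Fin n) (Fin n) ℝ)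
    (hPsymm : P.IsSymm)
    (hPpos : ∀ z : EuclideanSpace ℝ (Fin n), z ≠ 0 →
      0 < ⟪z, Matrix.toEuclideanCLM (𝕜 := ℝ) P z⟫)
    (hLyap : Aᵀ * P + P * A = (-2 : ℝ) • (1 : Matrix (Fin n) (Fin n) ℝ))
    (lm lM : ℝ) (hlm : 0 < lm) (hlM : 0 < lM)
    (hquad : ∀ z : EuclideanSpace ℝ (Fin n),
      lm * ‖z‖ ^ 2 ≤ ⟪z, Matrix.toEuclideanCLM (𝕜 := ℝ) P z⟫ ∧
      ⟪z, Matrix.toEuclideanCLM (𝕜 := ℝ) P z⟫ ≤ lM * ‖z‖ ^ 2)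
    (σ lam : ℝ) (hσ : σ ∈ Set.Ioo (0 : ℝ) 1) (hlam : lam = (1 - σ) / lM)
    (α : ℝ) (hα : α ∈ Set.Ioo 0 lam)
    (lam0 β ε δ : ℝ) (hlam0 : 0 < lam0) (hβ : 0 ≤ β) (hε : 0 < ε)
    (hδ : δ = lam * lm / lam0 * ε ^ 2)
    (x f : ℝ → EuclideanSpace ℝ (Fin n))
    (hx : ∀ t ≥ (0 : ℝ), HasDerivAt x (Matrix.toEuclideanCLM (𝕜 := ℝ) A (x t) + f t) t)
    (hf : ∀ t ≥ (0 : ℝ), ‖Matrix.toEuclideanCLM (𝕜 := ℝ) P‖ ^ 2 * ‖f t‖ ^ 2 ≤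
      σ * ‖x t‖ ^ 2 + lam0 * β * Real.exp (-α * t) + lam0 * δ) :
    (∃ C : ℝ, ∀ t ≥ (0 : ℝ), ‖x t‖ ≤ C) ∧
    Filter.limsup (fun t => ‖x t‖) Filter.atTop ≤ ε :=
  stmt_6_general A P hPsymm hLyap lm lM hlm hlM hquad σ lam hlam α hα lam0 β ε δ hlam0 hε hδ x f hx
    hf
end
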